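/- arXiv:2002.06166 — 4 statements merged into one kernel-verified Lean document; each statement's English description precedes it below -/
import Mathlib

section
/- For a real number s with 1 ≤ s ≤ 2 and an integer d ≥ 1, the volume of the region {(x_1,…,x_d) ∈ [0,1]^d : x_1 + ⋯ + x_d ≤ s} equals s^d/d! − (s−1)^d/((d−1)!). -/
/-!
Cutting off the first coordinate gives `v (n + 1) s = ∫ t in 0..1, v n (s - t)`. The Irwin–Hall
expression `F n s = (∑ k ≤ n, (-1) ^ k * n.choose k * max (s - k) 0 ^ n) / n!` obeys the same
recursion, since `max x 0 ^ (n + 1) / (n + 1)` is a primitive of `max x 0 ^ n` and Pascal's rule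
recombines the coefficients; `F 1 = v 1` starts the induction. For `1 ≤ s ≤ 2` only the terms
`k = 0, 1` of `F d s` survive.
-/

open MeasureTheory Set

theorem hasDerivAt_max_zero_pow_succ_div {n : ℕ} (hn : n ≠ 0) (u : ℝ) :
    HasDerivAt (fun x : ℝ => max x 0 ^ (n + 1) / (n + 1)) (max u 0 ^ n) u := by
  refine hasDerivAt_of_hasDerivAt_of_ne' (g := fun x : ℝ => max x 0 ^ n) (x := 0)
    (fun y hy => ?_) (by fun_prop) (by fun_prop) u
  rcases hy.lt_or_gt with hy | hy
  · rw [max_eq_right hy.le, zero_pow hn]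
    refine (hasDerivAt_const y (0 : ℝ)).congr_of_eventuallyEq ?_
    filter_upwards [Iio_mem_nhds hy] with x (hx : x < 0)
    simp [max_eq_right hx.le]
  · rw [max_eq_left hy.le]
    have h := (hasDerivAt_pow (n + 1) y).div_const ((n : ℝ) + 1)
    rw [Nat.add_sub_cancel, Nat.cast_add_one, mul_div_cancel_left₀ _ (by positivity)] at h
    refine h.congr_of_eventuallyEq ?_
    filter_upwards [Ioi_mem_nhds hy] with x (hx : 0 < x)
    simp [max_eq_left hx.le]

theorem integral_max_sub_zero_pow {n : ℕ} (hn : n ≠ 0) (c : ℝ) :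
    ∫ t in (0 : ℝ)..1, max (c - t) 0 ^ n
      = (max c 0 ^ (n + 1) - max (c - 1) 0 ^ (n + 1)) / (n + 1) := by
  rw [intervalIntegral.integral_comp_sub_left (fun u => max u 0 ^ n) c,
    intervalIntegral.integral_eq_sub_of_hasDerivAt
      (fun x _ => hasDerivAt_max_zero_pow_succ_div hn x)
      (Continuous.intervalIntegrable (by fun_prop) _ _), sub_zero, sub_div]

theorem Finset.sum_range_alternating_choose_mul_sub {R : Type*} [CommRing R] (n : ℕ)
    (g : ℕ → R) :
    ∑ k ∈ range (n + 1), (-1) ^ k * n.choose k * (g k - g (k + 1))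
      = ∑ k ∈ range (n + 2), (-1) ^ k * (n + 1).choose k * g k := by
  have top : ∑ k ∈ range (n + 2), (-1) ^ k * n.choose k * g k
      = ∑ k ∈ range (n + 1), (-1) ^ k * n.choose k * g k := by
    rw [sum_range_succ, Nat.choose_succ_self, Nat.cast_zero, mul_zero, zero_mul, add_zero]
  simp only [mul_sub, sum_sub_distrib]
  rw [← top, sum_range_succ' (fun k => (-1) ^ k * (n.choose k : R) * g k),
    sum_range_succ' (fun k => (-1) ^ k * ((n + 1).choose k : R) * g k)]
  simp only [Nat.choose_succ_succ, Nat.cast_add, pow_succ, mul_add, add_mul, sum_add_distrib,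
    Nat.choose_zero_right, pow_zero, Nat.succ_eq_add_one, mul_neg, mul_one, neg_mul,
    sum_neg_distrib]
  ring

noncomputable def irwinHallCDF (n : ℕ) (s : ℝ) : ℝ :=
  (∑ k ∈ Finset.range (n + 1), (-1) ^ k * n.choose k * max (s - k) 0 ^ n) / n.factorial

theorem integral_irwinHallCDF_sub {n : ℕ} (hn : n ≠ 0) (s : ℝ) :
    ∫ t in (0 : ℝ)..1, irwinHallCDF n (s - t) = irwinHallCDF (n + 1) s := by
  have term (k : ℕ) : ∫ t in (0 : ℝ)..1, (-1) ^ k * n.choose k * max (s - t - k) 0 ^ n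
      = (-1) ^ k * n.choose k * (max (s - k) 0 ^ (n + 1) - max (s - ↑(k + 1)) 0 ^ (n + 1))
        / (n + 1) := by
    simp_rw [sub_right_comm s _ (k : ℝ)]
    rw [intervalIntegral.integral_const_mul, integral_max_sub_zero_pow hn, Nat.cast_add_one,
      ← sub_sub, mul_div_assoc]
  simp only [irwinHallCDF, intervalIntegral.integral_div]
  rw [intervalIntegral.integral_finsetSum
    fun k _ => Continuous.intervalIntegrable (by fun_prop) _ _]
  simp only [term, ← Finset.sum_div]
  rw [Finset.sum_range_alternating_choose_mul_sub n (fun k => max (s - k) 0 ^ (n + 1)),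
    Nat.factorial_succ, Nat.cast_mul, div_div, Nat.cast_add_one, mul_comm]

theorem irwinHallCDF_one (s : ℝ) : irwinHallCDF 1 s = max s 0 - max (s - 1) 0 := by
  simp [irwinHallCDF, Finset.sum_range_succ, sub_eq_add_neg]

theorem irwinHallCDF_of_mem_Icc_one_two {d : ℕ} (hd : d ≠ 0) {s : ℝ} (hs1 : 1 ≤ s)
    (hs2 : s ≤ 2) :
    irwinHallCDF d s = s ^ d / d.factorial - (s - 1) ^ d / (d - 1).factorial := by
  obtain ⟨m, rfl⟩ : ∃ m, d = m + 1 := ⟨d - 1, by omega⟩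
  have vanish (k : ℕ) : max (s - ↑(k + 2)) 0 ^ (m + 1) = 0 := by
    rw [max_eq_right (by push_cast; linarith), zero_pow m.succ_ne_zero]
  simp only [irwinHallCDF, Finset.sum_range_succ' _ (m + 1), Finset.sum_range_succ' _ m, vanish,
    mul_zero, Finset.sum_const_zero, zero_add, Nat.cast_zero, Nat.cast_one, sub_zero,
    Nat.choose_zero_right, Nat.choose_one_right, Nat.add_sub_cancel, Nat.factorial_succ]
  rw [max_eq_left (sub_nonneg.2 hs1), max_eq_left (zero_le_one.trans hs1)]
  push_cast
  field_simp
  ring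

def unitCubeSublevel (n : ℕ) (s : ℝ) : Set (Fin n → ℝ) :=
  {x | (∀ i, x i ∈ Icc (0 : ℝ) 1) ∧ ∑ i, x i ≤ s}

theorem measurableSet_unitCubeSublevel (n : ℕ) (s : ℝ) :
    MeasurableSet (unitCubeSublevel n s) := by
  unfold unitCubeSublevel
  measurability

theorem unitCubeSublevel_mono (n : ℕ) : Monotone (unitCubeSublevel n) :=
  fun _ _ hst _ hx => ⟨hx.1, hx.2.trans hst⟩

theorem volume_unitCubeSublevel_lt_top (n : ℕ) (s : ℝ) : volume (unitCubeSublevel n s) < ⊤ :=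
  ((Metric.isBounded_Icc (0 : Fin n → ℝ) 1).subset
    fun _ hx => ⟨fun i => (hx.1 i).1, fun i => (hx.1 i).2⟩).measure_lt_top

theorem cons_mem_unitCubeSublevel_succ {n : ℕ} {s t : ℝ} {y : Fin n → ℝ} :
    Fin.cons t y ∈ unitCubeSublevel (n + 1) s ↔ t ∈ Icc 0 1 ∧ y ∈ unitCubeSublevel n (s - t) := by
  simp only [unitCubeSublevel, mem_ofPred_eq, Fin.forall_fin_succ, Fin.sum_univ_succ,
    Fin.cons_zero, Fin.cons_succ, le_sub_iff_add_le']
  tauto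

theorem volume_unitCubeSublevel_succ (n : ℕ) (s : ℝ) :
    volume (unitCubeSublevel (n + 1) s)
      = ∫⁻ t in Icc (0 : ℝ) 1, volume (unitCubeSublevel n (s - t)) := by
  have he := (volume_preserving_piFinSuccAbove (fun _ : Fin (n + 1) => ℝ) 0).symm
  rw [← he.measure_preimage_equiv, Measure.volume_eq_prod,
    Measure.prod_apply (he.measurable (measurableSet_unitCubeSublevel (n + 1) s)),
    ← lintegral_indicator measurableSet_Icc]
  refine lintegral_congr fun t => ?_
  have slice : Prod.mk t ⁻¹' ((MeasurableEquiv.piFinSuccAbove (fun _ => ℝ) 0).symm ⁻¹'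
      unitCubeSublevel (n + 1) s) = {y | t ∈ Icc 0 1 ∧ y ∈ unitCubeSublevel n (s - t)} := by
    ext y
    simp only [mem_preimage, MeasurableEquiv.piFinSuccAbove_symm_apply, Fin.insertNthEquiv_zero]
    exact cons_mem_unitCubeSublevel_succ
  rw [slice]
  by_cases ht : t ∈ Icc (0 : ℝ) 1 <;> simp [ht]

theorem volume_unitCubeSublevel_one (s : ℝ) :
    volume (unitCubeSublevel 1 s) = ENNReal.ofReal (min 1 s) := by
  have : unitCubeSublevel 1 s = MeasurableEquiv.funUnique (Fin 1) ℝ ⁻¹' Icc 0 (min 1 s) := by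
    ext x
    simp [unitCubeSublevel, and_assoc]
  rw [this]
  exact ((volume_preserving_funUnique (Fin 1) ℝ).measure_preimage_equiv _).trans (by rw [Real.volume_Icc, sub_zero])

-- Stated for `toReal` so that `integral_toReal` applies without knowing `0 ≤ irwinHallCDF n s`.
theorem toReal_volume_unitCubeSublevel {n : ℕ} (hn : n ≠ 0) (s : ℝ) :
    (volume (unitCubeSublevel n s)).toReal = irwinHallCDF n s := by
  induction n generalizing s with
  | zero => exact absurd rfl hn
  | succ n ih =>
    rcases eq_or_ne n 0 with rfl | hn
    · rw [volume_unitCubeSublevel_one, irwinHallCDF_one, ENNReal.toReal_ofReal']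
      simp only [max_def, min_def]
      split_ifs <;> linarith
    have slice_measurable : Measurable fun t => volume (unitCubeSublevel n (s - t)) :=
      Antitone.measurable fun t t' htt' =>
        measure_mono (unitCubeSublevel_mono n (by linarith))
    rw [volume_unitCubeSublevel_succ, ← integral_toReal slice_measurable.aemeasurable
      (.of_forall fun t => volume_unitCubeSublevel_lt_top n _)]
    simp only [ih hn]
    rw [integral_Icc_eq_integral_Ioc, ← intervalIntegral.integral_of_le zero_le_one,
      integral_irwinHallCDF_sub hn]

theorem volume_unitCubeSublevel {n : ℕ} (hn : n ≠ 0) (s : ℝ) :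
    volume (unitCubeSublevel n s) = ENNReal.ofReal (irwinHallCDF n s) := by
  rw [← toReal_volume_unitCubeSublevel hn,
    ENNReal.ofReal_toReal (volume_unitCubeSublevel_lt_top n s).ne]

theorem stmt2 (d : ℕ) (hd : 1 ≤ d) (s : ℝ) (hs1 : 1 ≤ s) (hs2 : s ≤ 2) :
    volume {x : Fin d → ℝ | (∀ i, x i ∈ Set.Icc (0 : ℝ) 1) ∧ ∑ i, x i ≤ s}
      = ENNReal.ofReal (s ^ d / d.factorial - (s - 1) ^ d / (d - 1).factorial) := by
  rw [← irwinHallCDF_of_mem_Icc_one_two (by omega) hs1 hs2]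
  exact volume_unitCubeSublevel (by omega) s
end

section
/- Let e ≥ 3 be a real number and define f(s) = s^3 − (e+2)(s−1)^3 on the interval [1,2]. Then f attains its maximum on [1,2] at s₊ = (e+2+√(e+2))/(e+1), and f(s₊) = s₊². -/
/-! Write `e + 2 = q ^ 2` with `q = √(e + 2) ≥ 1`, so that `s₊ = q / (q - 1)`. For every `t`,
`s₊ ^ 2 - f t = (t - s₊) ^ 2 * ((q ^ 2 - 1) * t - q ^ 2 + 2 * q)`, and the last factor is at
least `2 * q - 1 > 0` when `t ≥ 1`. Hence `f ≤ s₊ ^ 2` on `[1, ∞)`, with equality at `t = s₊`. -/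

section CubicWithCriticalPoint

variable {q s : ℝ}

theorem sq_sub_cubic_eq_sq_mul (hs : (q - 1) * s = q) (t : ℝ) :
    s ^ 2 - (t ^ 3 - q ^ 2 * (t - 1) ^ 3) = (t - s) ^ 2 * ((q ^ 2 - 1) * t - q ^ 2 + 2 * q) := by
  linear_combination (2 * (q + 1) * t ^ 2 - ((q + 1) * s + 3 * q) * t + ((q - 1) * s + q)) * hs

theorem cubic_eq_sq (hs : (q - 1) * s = q) : s ^ 3 - q ^ 2 * (s - 1) ^ 3 = s ^ 2 := by
  linear_combination -sq_sub_cubic_eq_sq_mul hs s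

theorem isMaxOn_cubic_Ici (hq : 1 ≤ q) (hs : (q - 1) * s = q) :
    IsMaxOn (fun t : ℝ => t ^ 3 - q ^ 2 * (t - 1) ^ 3) (Set.Ici 1) s := by
  intro t (ht : 1 ≤ t)
  have hfactor : 0 ≤ (q ^ 2 - 1) * t - q ^ 2 + 2 * q := by
    nlinarith [mul_nonneg (by nlinarith : (0 : ℝ) ≤ q ^ 2 - 1) (sub_nonneg.mpr ht)]
  have hgap := sq_sub_cubic_eq_sq_mul hs t
  show t ^ 3 - q ^ 2 * (t - 1) ^ 3 ≤ s ^ 3 - q ^ 2 * (s - 1) ^ 3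
  rw [cubic_eq_sq hs]
  linarith [mul_nonneg (sq_nonneg (t - s)) hfactor]

end CubicWithCriticalPoint

theorem stmt3 (e : ℝ) (he : 3 ≤ e) :
    IsMaxOn (fun s : ℝ => s ^ 3 - (e + 2) * (s - 1) ^ 3) (Set.Icc 1 2)
      ((e + 2 + Real.sqrt (e + 2)) / (e + 1)) ∧
    (fun s : ℝ => s ^ 3 - (e + 2) * (s - 1) ^ 3) ((e + 2 + Real.sqrt (e + 2)) / (e + 1))
      = ((e + 2 + Real.sqrt (e + 2)) / (e + 1)) ^ 2 := by
  set q := Real.sqrt (e + 2)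
  have hq : q ^ 2 = e + 2 := Real.sq_sqrt (by linarith)
  have hq1 : 1 ≤ q := Real.one_le_sqrt.mpr (by linarith)
  have hs : (q - 1) * ((e + 2 + q) / (e + 1)) = q := by
    rw [← mul_div_assoc, div_eq_iff (by linarith)]
    linear_combination hq
  have hmax := (isMaxOn_cubic_Ici hq1 hs).on_subset
    (Set.Icc_subset_Ici_self : Set.Icc (1 : ℝ) 2 ⊆ _)
  have hval := cubic_eq_sq hs
  rw [hq] at hmax hval
  exact ⟨hmax, hval⟩
end

section
/- The volume of the subset of the unit d-cube [0,1]^d consisting of points whose coordinate sum lies between k and k+1 equals A(d,k)/d!, where A(d,k) is the Eulerian number. -/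
/-!
Let `F_d(s)` be the volume of `{x ∈ [0,1]^d : ∑ xᵢ ≤ s}`. Slicing along the first coordinate gives
`F_{d+1}(s) = ∫_{s-1}^{s} F_d`, and integration over a unit window commutes with the forward
difference `Δ`. Starting from the Heaviside function `F_0`, induction gives
`d! F_d(s) = Δ^d (s₊^d) (s - d)`, so `d!` times the volume of the slab `k ≤ ∑ xᵢ ≤ k + 1` is
`Δ^{d+1} (s₊^d) (k - d)`. Since `s₊^{d+1} = s · s₊^d`, the Leibniz rule
`Δ^{n+1} (u f) = (u + n + 1) Δ^{n+1} f + (n + 1) Δ^n f` shows that these numbers satisfy the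
recurrence of the Eulerian numbers.
-/

open MeasureTheory

/-- Eulerian numbers. -/
def eulerian : ℕ → ℕ → ℕ
  | 0, 0 => 1
  | 0, _ + 1 => 0
  | n + 1, 0 => eulerian n 0
  | n + 1, k + 1 => (k + 2) * eulerian n (k + 1) + (n + 1 - (k + 1)) * eulerian n k

open Set fwdDiff

theorem fwdDiff_iter_eq_of_forall_lt {M G : Type*} [AddCommMonoid M] [AddCommGroup G] (h : M)
    {f : M → G} {n : ℕ} {y : M} (hf : ∀ k < n, f (y + k • h) = 0) :
    Δ_[h] ^[n] f y = f (y + n • h) := by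
  rw [fwdDiff_iter_eq_sum_shift, Finset.sum_range_succ,
    Finset.sum_eq_zero fun k hk => by rw [hf k (Finset.mem_range.mp hk), smul_zero]]
  simp

theorem fwdDiff_iter_succ_id_mul {R : Type*} [CommRing R] (f : R → R) (n : ℕ) (x : R) :
    Δ_[1] ^[n + 1] (fun u => u * f u) x
      = (x + (n + 1)) * Δ_[1] ^[n + 1] f x + (n + 1) * Δ_[1] ^[n] f x := by
  induction n generalizing x with
  | zero =>
    simp only [zero_add, Function.iterate_one, Function.iterate_zero, id, fwdDiff, Nat.cast_zero]
    ring
  | succ n ih =>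
    rw [Function.iterate_succ_apply', fwdDiff, ih, ih]
    simp only [Function.iterate_succ_apply', fwdDiff]
    push_cast
    ring

theorem integral_fwdDiff_iter {f g : ℝ → ℝ} (hf : ∀ a b, IntervalIntegrable f volume a b)
    (hfg : ∀ a b, ∫ u in a..b, f u = g b - g a) (h : ℝ) (n : ℕ) (a b : ℝ) :
    ∫ u in a..b, Δ_[h] ^[n] f u = Δ_[h] ^[n] g b - Δ_[h] ^[n] g a := by
  have hint (c : ℝ) : IntervalIntegrable (fun u => f (u + c)) volume a b := by
    simpa using (hf (a + c) (b + c)).comp_add_right c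
  have hshift (c : ℝ) : ∫ u in a..b, f (u + c) = g (b + c) - g (a + c) := by
    rw [intervalIntegral.integral_comp_add_right, hfg]
  simp only [fwdDiff_iter_eq_sum_shift, zsmul_eq_mul]
  rw [intervalIntegral.integral_finsetSum fun k _ => (hint _).const_mul _]
  simp only [intervalIntegral.integral_const_mul, hshift, mul_sub, Finset.sum_sub_distrib]

/-- Since `0 ^ 0 = 1`, `truncPow 0` is the Heaviside function `1_{u ≥ 0}`, i.e. `d! F_d` for
`d = 0`. -/
noncomputable def truncPow (n : ℕ) : ℝ → ℝ := (Ici 0).indicator (· ^ n)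

theorem truncPow_apply (n : ℕ) (u : ℝ) : truncPow n u = if 0 ≤ u then u ^ n else 0 := by
  simp [truncPow, indicator_apply]

theorem truncPow_succ (n : ℕ) (u : ℝ) : truncPow (n + 1) u = u * truncPow n u := by
  simp only [truncPow_apply]
  split_ifs <;> ring

theorem truncPow_succ_eq_max (n : ℕ) (u : ℝ) : truncPow (n + 1) u = max u 0 ^ (n + 1) := by
  rw [truncPow_apply]
  split_ifs with hu
  · rw [max_eq_left hu]
  · rw [max_eq_right (by linarith), zero_pow n.succ_ne_zero]

theorem intervalIntegrable_truncPow (n : ℕ) (a b : ℝ) :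
    IntervalIntegrable (truncPow n) volume a b :=
  let h := (continuous_pow n).intervalIntegrable (μ := volume) a b
  ⟨h.1.indicator measurableSet_Ici, h.2.indicator measurableSet_Ici⟩

theorem hasDerivWithinAt_truncPow_succ (n : ℕ) (x : ℝ) :
    HasDerivWithinAt (truncPow (n + 1)) ((n + 1) * truncPow n x) (Ioi x) x := by
  rcases lt_or_ge x 0 with hx | hx
  · have hzero : truncPow (n + 1) =ᶠ[nhds x] fun _ => 0 := by
      filter_upwards [eventually_lt_nhds hx] with u hu
      rw [truncPow_apply, if_neg hu.not_ge]
    rw [truncPow_apply, if_neg hx.not_ge, mul_zero]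
    exact ((hasDerivAt_const x (0 : ℝ)).congr_of_eventuallyEq hzero).hasDerivWithinAt
  · have hpow := (hasDerivAt_pow (n + 1) x).hasDerivWithinAt (s := Ioi x)
    rw [truncPow_apply, if_pos hx]
    push_cast at hpow ⊢
    refine hpow.congr (fun u hu => ?_) ?_ <;> rw [truncPow_apply, if_pos]
    exacts [hx.trans hu.le, hx]

theorem integral_truncPow (n : ℕ) (a b : ℝ) :
    ∫ u in a..b, truncPow n u = truncPow (n + 1) b / (n + 1) - truncPow (n + 1) a / (n + 1) := by
  refine intervalIntegral.integral_eq_sub_of_hasDeriv_right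
    (f := fun u => truncPow (n + 1) u / (n + 1)) ?_ (fun x _ => ?_)
    (intervalIntegrable_truncPow n a b)
  · have hcont : Continuous (truncPow (n + 1)) := by
      simp_rw [funext (truncPow_succ_eq_max n)]
      fun_prop
    exact (hcont.div_const _).continuousOn
  · have := (hasDerivWithinAt_truncPow_succ n x).div_const (n + 1 : ℝ)
    rwa [mul_div_cancel_left₀ _ (by positivity)] at this

theorem volume_eq_lintegral_volume_cons {α : Type*} [MeasureSpace α]
    [SigmaFinite (volume : Measure α)] {d : ℕ} {S : Set (Fin (d + 1) → α)}
    (hS : MeasurableSet S) :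
    volume S = ∫⁻ t, volume {y : Fin d → α | Fin.cons t y ∈ S} := by
  have e := (volume_preserving_piFinSuccAbove (fun _ : Fin (d + 1) => α) 0).symm
  rw [← e.measure_preimage hS.nullMeasurableSet, Measure.volume_eq_prod,
    Measure.prod_apply (e.measurable hS)]
  congr 1 with t
  congr 1 with y
  simp [Fin.consEquiv]

theorem volume_setOf_sum_eq_eq_zero (d : ℕ) (c : ℝ) :
    volume {x : Fin (d + 1) → ℝ | ∑ i, x i = c} = 0 := by
  let L : (Fin (d + 1) → ℝ) →ᵃ[ℝ] ℝ :=
    (∑ i, LinearMap.proj i : (Fin (d + 1) → ℝ) →ₗ[ℝ] ℝ).toAffineMap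
  have hne : (AffineSubspace.mk' c ⊥).comap L ≠ ⊤ := by
    intro htop
    have : Pi.single 0 (c + 1) ∈ (AffineSubspace.mk' c ⊥).comap L :=
      htop ▸ AffineSubspace.mem_top _ _ _
    simp [L] at this
  convert Measure.addHaar_affineSubspace volume _ hne
  ext x
  simp [L, sub_eq_zero]

def cubeSublevel (d : ℕ) (s : ℝ) : Set (Fin d → ℝ) :=
  {x | (∀ i, x i ∈ Icc (0 : ℝ) 1) ∧ ∑ i, x i ≤ s}

theorem measurableSet_cubeSublevel (d : ℕ) (s : ℝ) : MeasurableSet (cubeSublevel d s) := by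
  unfold cubeSublevel
  measurability

theorem cubeSublevel_mono (d : ℕ) : Monotone (cubeSublevel d) :=
  fun _ _ hst _ hx => ⟨hx.1, hx.2.trans hst⟩

theorem volume_cubeSublevel_ne_top (d : ℕ) (s : ℝ) : volume (cubeSublevel d s) ≠ ⊤ := by
  refine ne_top_of_le_ne_top ENNReal.one_ne_top ?_
  calc volume (cubeSublevel d s) ≤ volume (univ.pi fun _ : Fin d => Icc (0 : ℝ) 1) :=
        measure_mono fun x hx i _ => hx.1 i
    _ = 1 := by simp [Real.volume_Icc_pi]

theorem cons_mem_cubeSublevel {d : ℕ} {s t : ℝ} {y : Fin d → ℝ} :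
    Fin.cons t y ∈ cubeSublevel (d + 1) s ↔ t ∈ Icc 0 1 ∧ y ∈ cubeSublevel d (s - t) := by
  simp only [cubeSublevel, mem_ofPred_eq, Fin.forall_fin_succ, Fin.sum_univ_succ, Fin.cons_zero,
    Fin.cons_succ, le_sub_iff_add_le', and_assoc]

theorem volume_cubeSublevel_succ (d : ℕ) (s : ℝ) :
    volume (cubeSublevel (d + 1) s) = ∫⁻ t in Icc 0 1, volume (cubeSublevel d (s - t)) := by
  rw [volume_eq_lintegral_volume_cons (measurableSet_cubeSublevel _ _),
    ← lintegral_indicator measurableSet_Icc]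
  congr 1 with t
  simp only [cons_mem_cubeSublevel]
  by_cases ht : t ∈ Icc (0 : ℝ) 1 <;> simp [ht, cubeSublevel]

theorem measureReal_cubeSublevel_succ (d : ℕ) (s : ℝ) :
    volume.real (cubeSublevel (d + 1) s)
      = ∫ t in Icc 0 1, volume.real (cubeSublevel d (s - t)) := by
  have hanti : Antitone fun t => volume (cubeSublevel d (s - t)) :=
    fun _ _ h => measure_mono (cubeSublevel_mono d (sub_le_sub_left h s))
  rw [measureReal_def, volume_cubeSublevel_succ, ← integral_toReal hanti.measurable.aemeasurable
    (ae_of_all _ fun t => (volume_cubeSublevel_ne_top d _).lt_top)]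
  rfl

theorem measureReal_cubeSublevel (d : ℕ) (s : ℝ) :
    volume.real (cubeSublevel d s) = Δ_[1] ^[d] (truncPow d) (s - d) / d.factorial := by
  induction d generalizing s with
  | zero =>
    by_cases hs : 0 ≤ s <;> simp [cubeSublevel, truncPow_apply, hs, Measure.volume_pi_eq_dirac 0]
  | succ d ih =>
    have hprim : (fun u => truncPow (d + 1) u / (d + 1)) = ((d : ℝ) + 1)⁻¹ • truncPow (d + 1) := by
      funext u
      simp [div_eq_inv_mul]
    have h₀ : s - 0 - d = s - ↑(d + 1) + 1 := by push_cast; ring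
    have h₁ : s - 1 - d = s - ↑(d + 1) := by push_cast; ring
    simp_rw [measureReal_cubeSublevel_succ, ih]
    rw [integral_div, integral_Icc_eq_integral_Ioc, ← intervalIntegral.integral_of_le zero_le_one,
      intervalIntegral.integral_comp_sub_left (fun u => Δ_[1] ^[d] (truncPow d) (u - d)) s,
      intervalIntegral.integral_comp_sub_right,
      integral_fwdDiff_iter (intervalIntegrable_truncPow d) (integral_truncPow d), hprim,
      fwdDiff_iter_const_smul, Function.iterate_succ_apply' _ d, fwdDiff, h₀, h₁,
      Nat.factorial_succ]
    simp only [Pi.smul_apply, smul_eq_mul]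
    push_cast
    field_simp

/-- `eulerianFun d k = ∑ⱼ (-1)ʲ (d+1).choose j (k + 1 - j)₊ᵈ`, the classical closed form of the
Eulerian number, extended to real `k`. -/
noncomputable def eulerianFun (d : ℕ) (x : ℝ) : ℝ := Δ_[1] ^[d + 1] (truncPow d) (x - d)

theorem volume_cubeSlab (d : ℕ) (s : ℝ) :
    volume {x : Fin (d + 1) → ℝ | (∀ i, x i ∈ Icc 0 1) ∧ s ≤ ∑ i, x i ∧ ∑ i, x i ≤ s + 1}
      = ENNReal.ofReal (eulerianFun (d + 1) s / (d + 1).factorial) := by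
  have hslab : {x : Fin (d + 1) → ℝ | (∀ i, x i ∈ Icc 0 1) ∧ s ≤ ∑ i, x i ∧ ∑ i, x i ≤ s + 1}
      \ {x | ∑ i, x i = s} = cubeSublevel (d + 1) (s + 1) \ cubeSublevel (d + 1) s := by
    ext x
    simp only [cubeSublevel, mem_sdiff, mem_ofPred_eq, not_and, not_le]
    constructor
    · rintro ⟨⟨hx, hs, hs1⟩, hne⟩
      exact ⟨⟨hx, hs1⟩, fun _ => lt_of_le_of_ne hs (Ne.symm hne)⟩
    · rintro ⟨⟨hx, hs1⟩, hlt⟩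
      exact ⟨⟨hx, (hlt hx).le, hs1⟩, (hlt hx).ne'⟩
  rw [← measure_sdiff_null (volume_setOf_sum_eq_eq_zero d s), hslab,
    ← ofReal_measureReal (measure_ne_top_of_subset sdiff_subset (volume_cubeSublevel_ne_top _ _)),
    measureReal_sdiff (cubeSublevel_mono _ (by linarith)) (measurableSet_cubeSublevel _ _)
      (volume_cubeSublevel_ne_top _ _),
    measureReal_cubeSublevel, measureReal_cubeSublevel, ← sub_div, eulerianFun,
    Function.iterate_succ_apply' _ (d + 1), fwdDiff, sub_add_eq_add_sub]

theorem eulerianFun_succ_add_one (d : ℕ) (x : ℝ) :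
    eulerianFun (d + 1) (x + 1)
      = (x + 2) * eulerianFun d (x + 1) + (d - x) * eulerianFun d x := by
  have hF : truncPow (d + 1) = fun u => u * truncPow d u := funext (truncPow_succ d)
  have hx : x + 1 - ((d + 1 : ℕ) : ℝ) = x - d := by push_cast; ring
  rw [eulerianFun, hF, hx, fwdDiff_iter_succ_id_mul, Function.iterate_succ_apply' _ (d + 1),
    fwdDiff, eulerianFun, eulerianFun, show x + 1 - (d : ℝ) = x - d + 1 by ring]
  push_cast
  ring

theorem eulerianFun_eq_zero_of_le {d : ℕ} {x : ℝ} (hx : d ≤ x) : eulerianFun d x = 0 := by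
  induction d generalizing x with
  | zero =>
    push_cast at hx
    simp [eulerianFun, fwdDiff, truncPow_apply, hx, show (0 : ℝ) ≤ x + 1 by linarith]
  | succ d ih =>
    push_cast at hx
    have hrec := eulerianFun_succ_add_one d (x - 1)
    rw [sub_add_cancel] at hrec
    rw [hrec, ih (by linarith), ih (by linarith)]
    ring

theorem eulerianFun_succ_zero (d : ℕ) : eulerianFun (d + 1) 0 = 1 := by
  rw [eulerianFun, fwdDiff_iter_eq_of_forall_lt]
  · simp only [nsmul_eq_mul, mul_one]
    rw [truncPow_apply, if_pos (by push_cast; linarith)]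
    push_cast
    ring_nf
  · intro k hk
    have hk' : (k : ℝ) ≤ d + 1 := by exact_mod_cast Nat.lt_succ_iff.mp hk
    rw [truncPow_succ_eq_max, nsmul_eq_mul, mul_one, max_eq_right (by push_cast; linarith),
      zero_pow d.succ_ne_zero]

theorem eulerian_zero_right (n : ℕ) : eulerian n 0 = 1 := by
  induction n with
  | zero => rfl
  | succ n ih => rw [eulerian, ih]

/-- False in dimension `0`: `eulerianFun 0 0 = 0` but `eulerian 0 0 = 1`. -/
theorem eulerianFun_natCast (d k : ℕ) : eulerianFun (d + 1) k = eulerian (d + 1) k := by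
  induction d generalizing k with
  | zero =>
    rcases k with _ | k
    · simpa [eulerian] using eulerianFun_succ_zero 0
    · rw [Nat.cast_succ, eulerianFun_succ_add_one,
        eulerianFun_eq_zero_of_le (by rw [Nat.cast_zero]; positivity),
        eulerianFun_eq_zero_of_le (by rw [Nat.cast_zero]; positivity)]
      simp [eulerian]
  | succ d ih =>
    rcases k with _ | k
    · rw [Nat.cast_zero, eulerianFun_succ_zero, eulerian_zero_right, Nat.cast_one]
    · rw [Nat.cast_add_one, eulerianFun_succ_add_one, ← Nat.cast_add_one, ih, ih,
        eulerian.eq_4 (d + 1) k, Nat.add_sub_add_right]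
      rcases le_or_gt k (d + 1) with hk | hk
      · push_cast [Nat.cast_sub hk]
        ring
      · have hzero : eulerian (d + 1) k = 0 := by
          exact_mod_cast (ih k).symm.trans (eulerianFun_eq_zero_of_le (by exact_mod_cast hk.le))
        rw [hzero, Nat.sub_eq_zero_of_le (by omega)]
        push_cast
        ring

theorem stmt9 (d k : ℕ) :
    volume {x : Fin d → ℝ | (∀ i, x i ∈ Set.Icc (0 : ℝ) 1) ∧
        (k : ℝ) ≤ ∑ i, x i ∧ ∑ i, x i ≤ (k : ℝ) + 1}
      = ENNReal.ofReal ((eulerian d k : ℝ) / d.factorial) := by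
  rcases d with _ | d
  · rcases k with _ | k
    · simp [eulerian, Measure.volume_pi_eq_dirac 0]
    · simp [eulerian, (Nat.cast_add_one_pos (α := ℝ) k).not_ge]
  · rw [volume_cubeSlab, eulerianFun_natCast]
end

section
/- The volume of the region {(x,y,z) ∈ [0,1]^3 : 0 ≤ x + y − z ≤ 1} equals 2/3. -/
/-!
Slice along the first coordinate. Over a point `(y₀, y₁)` of the unit square the fibre is
`[0, 1] ∩ [y₁ - y₀, y₁ - y₀ + 1]`, the overlap of two unit intervals, of length `1 - |y₁ - y₀|`.
The volume is therefore `∫∫_{[0,1]²} (1 - |y₁ - y₀|) = 1 - 1/3 = 2/3`.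
-/

open MeasureTheory Set

theorem volume_eq_lintegral_volume_insertNth {n : ℕ} (i : Fin (n + 1))
    {S : Set (Fin (n + 1) → ℝ)} (hS : MeasurableSet S) :
    volume S = ∫⁻ y, volume {z : ℝ | i.insertNth z y ∈ S} := by
  have he := (volume_preserving_piFinSuccAbove (fun _ : Fin (n + 1) => ℝ) i).symm
  rw [← he.measure_preimage hS.nullMeasurableSet, Measure.volume_eq_prod,
    Measure.prod_apply_symm (he.measurable hS)]
  rfl

theorem volume_Icc_inter_Icc_add (a b r : ℝ) :
    volume (Icc a (a + r) ∩ Icc b (b + r)) = ENNReal.ofReal (r - |a - b|) := by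
  rw [Icc_inter_Icc, Real.volume_Icc, min_add_add_right, ← max_sub_min_eq_abs']
  congr 1
  ring

theorem setIntegral_univ_pi_fin_two {F : (Fin 2 → ℝ) → ℝ} {t : Fin 2 → Set ℝ}
    (hF : IntegrableOn F (univ.pi t)) :
    ∫ y in univ.pi t, F y = ∫ u in t 0, ∫ v in t 1, F ![u, v] := by
  have he := (volume_preserving_finTwoArrow ℝ).symm
  have hpre : MeasurableEquiv.finTwoArrow.symm ⁻¹' univ.pi t = t 0 ×ˢ t 1 := by
    ext p
    simp [Fin.forall_fin_two]
  rw [← he.integrableOn_comp_preimage (MeasurableEquiv.measurableEmbedding _), hpre,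
    Measure.volume_eq_prod] at hF
  rw [← he.setIntegral_preimage_emb (MeasurableEquiv.measurableEmbedding _), hpre,
    Measure.volume_eq_prod]
  exact setIntegral_prod _ hF

theorem integral_one_sub (a : ℝ) : ∫ t in 0..a, (1 - t) = a - a ^ 2 / 2 := by
  rw [intervalIntegral.integral_sub intervalIntegrable_const intervalIntegral.intervalIntegrable_id,
    integral_id]
  simp

theorem integral_one_sub_abs_sub {u : ℝ} (hu : u ∈ Icc (0 : ℝ) 1) :
    ∫ v in 0..1, (1 - |v - u|) = 1 / 2 + u - u ^ 2 := by
  have hint : ∀ a b, IntervalIntegrable (fun v : ℝ => 1 - |v - u|) volume a b := fun a b =>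
    (by fun_prop : Continuous fun v : ℝ => 1 - |v - u|).intervalIntegrable a b
  have hleft : ∫ v in 0..u, (1 - |v - u|) = ∫ v in 0..u, (1 - (u - v)) :=
    intervalIntegral.integral_congr fun v hv => by
      rw [uIcc_of_le hu.1] at hv
      simp only [abs_sub_comm v u, abs_of_nonneg (sub_nonneg.2 hv.2)]
  have hright : ∫ v in u..1, (1 - |v - u|) = ∫ v in u..1, (1 - (v - u)) :=
    intervalIntegral.integral_congr fun v hv => by
      rw [uIcc_of_le hu.2] at hv
      simp only [abs_of_nonneg (sub_nonneg.2 hv.1)]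
  rw [← intervalIntegral.integral_add_adjacent_intervals (hint 0 u) (hint u 1), hleft, hright,
    intervalIntegral.integral_comp_sub_left (fun t => 1 - t),
    intervalIntegral.integral_comp_sub_right (fun t => 1 - t), sub_self, sub_zero,
    integral_one_sub, integral_one_sub]
  ring

theorem integral_half_add_sub_sq : ∫ u in (0 : ℝ)..1, (1 / 2 + u - u ^ 2) = 2 / 3 := by
  rw [intervalIntegral.integral_sub
      (intervalIntegrable_const.add intervalIntegral.intervalIntegrable_id)
      ((continuous_pow 2).intervalIntegrable _ _),
    intervalIntegral.integral_add intervalIntegrable_const intervalIntegral.intervalIntegrable_id,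
    integral_id, integral_pow]
  norm_num

theorem lintegral_unitSquare_ofReal_one_sub_abs_sub :
    ∫⁻ y in univ.pi (fun _ : Fin 2 => Icc (0 : ℝ) 1), ENNReal.ofReal (1 - |y 1 - y 0|) =
      ENNReal.ofReal (2 / 3) := by
  have hsquare : MeasurableSet (univ.pi fun _ : Fin 2 => Icc (0 : ℝ) 1) :=
    .univ_pi fun _ => measurableSet_Icc
  have hint : IntegrableOn (fun y : Fin 2 → ℝ => 1 - |y 1 - y 0|) (univ.pi fun _ => Icc 0 1) :=
    (by fun_prop : Continuous fun y : Fin 2 → ℝ => 1 - |y 1 - y 0|).continuousOn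
      |>.integrableOn_compact (isCompact_univ_pi fun _ => isCompact_Icc)
  have hnonneg : 0 ≤ᵐ[volume.restrict (univ.pi fun _ => Icc 0 1)]
      fun y : Fin 2 → ℝ => 1 - |y 1 - y 0| := by
    refine (ae_restrict_iff' hsquare).2 (.of_forall fun y hy => ?_)
    have h₀ := hy 0 (mem_univ _)
    have h₁ := hy 1 (mem_univ _)
    exact sub_nonneg.2 (abs_sub_le_iff.2 ⟨by linarith [h₀.1, h₁.2], by linarith [h₀.2, h₁.1]⟩)
  rw [← ofReal_integral_eq_lintegral_ofReal hint hnonneg, setIntegral_univ_pi_fin_two hint]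
  simp only [Matrix.cons_val_zero, Matrix.cons_val_one, integral_Icc_eq_integral_Ioc,
    ← intervalIntegral.integral_of_le zero_le_one]
  rw [← integral_half_add_sub_sq]
  congr 1
  exact intervalIntegral.integral_congr fun u hu =>
    integral_one_sub_abs_sub (by rwa [uIcc_of_le zero_le_one] at hu)

theorem insertNth_zero_mem_iff (y : Fin 2 → ℝ) (z : ℝ) :
    Fin.insertNth 0 z y ∈ {x : Fin 3 → ℝ | (∀ i, x i ∈ Set.Icc (0 : ℝ) 1) ∧
        0 ≤ x 0 + x 1 - x 2 ∧ x 0 + x 1 - x 2 ≤ 1} ↔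
      y ∈ univ.pi (fun _ => Icc 0 1) ∧ z ∈ Icc 0 (0 + 1) ∩ Icc (y 1 - y 0) (y 1 - y 0 + 1) := by
  simp only [Fin.insertNth_zero', mem_ofPred_eq, Fin.forall_fin_succ, Fin.cons_zero,
    Fin.cons_succ, mem_univ_pi, mem_inter_iff, mem_Icc, zero_add]
  -- `simp` leaves `Fin.cons z y 2`, which is `y 1` only by unfolding
  change _ ∧ 0 ≤ z + y 0 - y 1 ∧ z + y 0 - y 1 ≤ 1 ↔ _
  constructor
  · rintro ⟨⟨hz, hy⟩, h₁, h₂⟩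
    exact ⟨hy, hz, by linarith, by linarith⟩
  · rintro ⟨hy, hz, h₁, h₂⟩
    exact ⟨⟨hz, hy⟩, by linarith, by linarith⟩

theorem volume_setOf_insertNth_zero_mem (y : Fin 2 → ℝ) :
    volume {z : ℝ | Fin.insertNth 0 z y ∈ {x : Fin 3 → ℝ | (∀ i, x i ∈ Set.Icc (0 : ℝ) 1) ∧
        0 ≤ x 0 + x 1 - x 2 ∧ x 0 + x 1 - x 2 ≤ 1}} =
      (univ.pi fun _ => Icc 0 1).indicator (fun y => ENNReal.ofReal (1 - |y 1 - y 0|)) y := by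
  by_cases hy : y ∈ univ.pi fun _ => Icc (0 : ℝ) 1
  · simp only [insertNth_zero_mem_iff, hy, true_and, ofPred_mem_eq, indicator_of_mem]
    rw [volume_Icc_inter_Icc_add, zero_sub, abs_neg]
  · simp only [insertNth_zero_mem_iff, hy, false_and, ofPred_false, measure_empty,
      indicator_of_notMem, not_false_eq_true]

theorem stmt10 :
    volume {x : Fin 3 → ℝ | (∀ i, x i ∈ Set.Icc (0 : ℝ) 1) ∧
        0 ≤ x 0 + x 1 - x 2 ∧ x 0 + x 1 - x 2 ≤ 1}
      = ENNReal.ofReal (2 / 3) := by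
  have hS : MeasurableSet {x : Fin 3 → ℝ | (∀ i, x i ∈ Set.Icc (0 : ℝ) 1) ∧
      0 ≤ x 0 + x 1 - x 2 ∧ x 0 + x 1 - x 2 ≤ 1} := by
    measurability
  rw [volume_eq_lintegral_volume_insertNth 0 hS]
  simp_rw [volume_setOf_insertNth_zero_mem]
  rw [lintegral_indicator (.univ_pi fun _ => measurableSet_Icc),
    lintegral_unitSquare_ofReal_one_sub_abs_sub]
end
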